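/- Freezing time of the stuck zero-range process: For every δ ∈ (0,1) and every ε < 1 there exists ℓ̄ = ℓ̄(ε,δ) such that for all ℓ ≥ ℓ̄ and every initial configuration χ₀ ∈ A_ℓ(δ), the probability, under the law δ_{χ₀} e^{ℓ⁴ 𝓛^{SZR}_ℓ} of the stuck zero-range process at time ℓ⁴, of the set of configurations χ such that χ(y) ≥ 2 for some y ∈ Λ_ℓ (i.e. the process is not yet frozen) is at most exp(−ℓ^ε). -/

import Mathlib

/-!
Put `w(u) = u (ℓ + 1 - u)`, a weight vanishing at the boundary sites `0`, `ℓ + 1` with discrete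
Laplacian `w(y + 1) + w(y - 1) - 2 w(y) = -2`, and let `V(χ) = exp (ℓ⁻³ ∑ᵤ w(u) χ(u))` on unfrozen
configurations and `V = 0` on frozen ones. An active site `y` sends a particle to `y ± 1` at rate
one each, shifting the exponent by two numbers of size at most `ℓ⁻²` whose sum is `-2 ℓ⁻³`; a
second-order expansion of `exp` gives `𝓛 V ≤ -ℓ⁻³ V`. As `𝓛 + 2ℓ` preserves nonnegative functions,
`e^{t𝓛}` is monotone and the probability of being unfrozen at time `t` is at most
`e^{-t/ℓ³} V(χ₀)`. With `n ≤ 2ℓ` particles `V(χ₀) ≤ e²`, so at `t = ℓ⁴` it is at most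
`e^{2 - ℓ} ≤ exp (-ℓ^ε)` for large `ℓ`.
-/

open scoped BigOperators
open scoped Classical
open Fin.NatCast

namespace FEP

/-- Move one particle from site `x` to site `y`. -/
def move {I : Type*} [DecidableEq I] (ω : I → ℕ) (x y : I) : I → ℕ :=
  fun u => if u = x then ω x - 1 else if u = y then ω y + 1 else ω u

/-- The sector of zero-range configurations on `𝕋_K` with exactly `n` particles. -/
def ZRSector (K n : ℕ) [NeZero K] := {ω : ZMod K → ℕ // ∑ x : ZMod K, ω x = n}

lemma ZRSector.le {K n : ℕ} [NeZero K] (ω : ZRSector K n) (x : ZMod K) : ω.1 x ≤ n := by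
  have h : ω.1 x ≤ ∑ y : ZMod K, ω.1 y :=
    Finset.single_le_sum (f := ω.1) (fun i _ => Nat.zero_le _) (Finset.mem_univ x)
  simpa [ω.2] using h

noncomputable instance (K n : ℕ) [NeZero K] : Fintype (ZRSector K n) :=
  Fintype.ofInjective
    (fun ω : ZRSector K n => fun x : ZMod K =>
      (⟨ω.1 x, Nat.lt_succ_of_le (ZRSector.le ω x)⟩ : Fin (n + 1)))
    (fun a b h => Subtype.ext (funext fun x => congrArg Fin.val (congrFun h x)))

/-- The generator `𝓛^{ZR}_K` of the zero-range process, as a matrix on the sector with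
`n` particles. -/
noncomputable def genZR (K n : ℕ) [NeZero K] :
    Matrix (ZRSector K n) (ZRSector K n) ℝ :=
  fun ω ω' => ∑ x : ZMod K,
    (if 2 ≤ ω.1 x then (1 : ℝ) else 0) *
      (((if ω'.1 = move ω.1 x (x + 1) then (1 : ℝ) else 0) - (if ω' = ω then 1 else 0)) +
        ((if ω'.1 = move ω.1 x (x - 1) then (1 : ℝ) else 0) - (if ω' = ω then 1 else 0)))

/-- The zero-range generator as a continuous linear endomorphism. -/
noncomputable def genZRE (K n : ℕ) [NeZero K] :
    (ZRSector K n → ℝ) →L[ℝ] (ZRSector K n → ℝ) :=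
  LinearMap.toContinuousLinearMap (Matrix.toLin' (genZR K n))

/-- The probability, under the law `δ_{ω₀} e^{t 𝓛^{ZR}_K}` of the zero-range process at time `t`
started from `ω₀`, of the set `S`. -/
noncomputable def zrProb (K n : ℕ) [NeZero K] (ω₀ : ZRSector K n) (t : ℝ)
    (S : Set (ZRSector K n)) : ℝ :=
  (NormedSpace.exp (t • genZRE K n)) (fun ω => if ω ∈ S then (1 : ℝ) else 0) ω₀

/-- The local configuration on `Λ̄_ℓ` obtained from `ω` by restricting to `{x+1,…,x+ℓ}`,
keeping only the `⌊(1+δ)ℓ⌋` leftmost particles, with empty boundary sites. -/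
noncomputable def truncConf {K : ℕ} (ℓ : ℕ) (δ : ℝ) (ω : ZMod K → ℕ) (x : ZMod K) :
    ℕ → ℕ :=
  fun y => if 1 ≤ y ∧ y ≤ ℓ then
      min (ω (x + (y : ZMod K)))
        (⌊(1 + δ) * ℓ⌋₊ - ∑ z ∈ Finset.Ico 1 y, ω (x + (z : ZMod K)))
    else 0

/-- The set `A_ℓ(δ)` of configurations on `Λ̄_ℓ = {0,…,ℓ+1}`. -/
def memA (ℓ : ℕ) (δ : ℝ) (v : ℕ → ℕ) : Prop :=
  v 0 = 0 ∧ v (ℓ + 1) = 0 ∧ (∑ y ∈ Finset.Icc 1 ℓ, v y) = ⌊(1 + δ) * ℓ⌋₊ ∧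
    ((∑ y ∈ Finset.Icc 1 ℓ, y * v y : ℕ) : ℝ) ≤ (1 + δ / 2) * (1 + δ) * (ℓ * (ℓ + 1)) / 2

/-- The set `B_{K,ℓ}(δ)` of `δ`-regular zero-range configurations on `𝕋_K`. -/
def memB (K ℓ : ℕ) (δ : ℝ) (ω : ZMod K → ℕ) : Prop :=
  ∀ x : ZMod K, memA ℓ δ (truncConf ℓ δ ω x)

end FEP

namespace FEP

/-- The sector of configurations of the stuck zero-range process on `Λ̄_ℓ = {0,…,ℓ+1}`
with exactly `n` particles. -/
def SZRSector (ℓ n : ℕ) := {χ : Fin (ℓ + 2) → ℕ // ∑ y : Fin (ℓ + 2), χ y = n}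

lemma SZRSector.le {ℓ n : ℕ} (χ : SZRSector ℓ n) (y : Fin (ℓ + 2)) : χ.1 y ≤ n := by
  have h : χ.1 y ≤ ∑ z : Fin (ℓ + 2), χ.1 z :=
    Finset.single_le_sum (f := χ.1) (fun i _ => Nat.zero_le _) (Finset.mem_univ y)
  simpa [χ.2] using h

noncomputable instance (ℓ n : ℕ) : Fintype (SZRSector ℓ n) :=
  Fintype.ofInjective
    (fun χ : SZRSector ℓ n => fun y : Fin (ℓ + 2) =>
      (⟨χ.1 y, Nat.lt_succ_of_le (SZRSector.le χ y)⟩ : Fin (n + 1)))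
    (fun χ χ' h => Subtype.ext (funext fun y => congrArg Fin.val (congrFun h y)))

/-- The generator `𝓛^{SZR}_ℓ` of the stuck zero-range process on `Λ̄_ℓ`, as a matrix on the
sector with `n` particles: particles jump at rate one between neighbouring sites of
`Λ_ℓ = {1,…,ℓ}` when at least two particles are present, and particles reaching the boundary
sites `0` and `ℓ+1` never move again. -/
noncomputable def genSZR (ℓ n : ℕ) : Matrix (SZRSector ℓ n) (SZRSector ℓ n) ℝ :=
  fun χ χ' =>
    (if 2 ≤ χ.1 ((ℓ : ℕ) : Fin (ℓ + 2)) then (1 : ℝ) else 0) *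
        ((if χ'.1 = move χ.1 ((ℓ : ℕ) : Fin (ℓ + 2)) ((ℓ + 1 : ℕ) : Fin (ℓ + 2))
            then (1 : ℝ) else 0) - (if χ' = χ then 1 else 0))
      + (if 2 ≤ χ.1 ((1 : ℕ) : Fin (ℓ + 2)) then (1 : ℝ) else 0) *
        ((if χ'.1 = move χ.1 ((1 : ℕ) : Fin (ℓ + 2)) ((0 : ℕ) : Fin (ℓ + 2))
            then (1 : ℝ) else 0) - (if χ' = χ then 1 else 0))
      + ∑ y ∈ Finset.Icc 1 ℓ, ∑ z ∈ Finset.Icc 1 ℓ,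
          (if z = y + 1 ∨ y = z + 1 then
            (if 2 ≤ χ.1 ((y : ℕ) : Fin (ℓ + 2)) then (1 : ℝ) else 0) *
              ((if χ'.1 = move χ.1 ((y : ℕ) : Fin (ℓ + 2)) ((z : ℕ) : Fin (ℓ + 2))
                  then (1 : ℝ) else 0) - (if χ' = χ then 1 else 0))
          else 0)

/-- The stuck zero-range generator as a continuous linear endomorphism. -/
noncomputable def genSZRE (ℓ n : ℕ) :
    (SZRSector ℓ n → ℝ) →L[ℝ] (SZRSector ℓ n → ℝ) :=
  LinearMap.toContinuousLinearMap (Matrix.toLin' (genSZR ℓ n))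

/-- The probability, under the law `δ_{χ₀} e^{t 𝓛^{SZR}_ℓ}` of the stuck zero-range process at
time `t` started from `χ₀`, of the set `S`. -/
noncomputable def szrProb (ℓ n : ℕ) (χ₀ : SZRSector ℓ n) (t : ℝ)
    (S : Set (SZRSector ℓ n)) : ℝ :=
  (NormedSpace.exp (t • genSZRE ℓ n)) (fun χ => if χ ∈ S then (1 : ℝ) else 0) χ₀

end FEP

section Semigroup

variable {F : Type*} [NormedAddCommGroup F] [NormedSpace ℝ F] [PartialOrder F] [PosSMulMono ℝ F]

lemma ContinuousLinearMap.pow_apply_le_smul_of_apply_le {P : F →L[ℝ] F} (hP : Monotone P)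
    {c : ℝ} (hc : 0 ≤ c) {f h : F} (hPh : P h ≤ c • h) (hfh : f ≤ h) (k : ℕ) :
    (P ^ k) f ≤ c ^ k • h := by
  induction k with
  | zero => simpa using hfh
  | succ k ih =>
    calc (P ^ (k + 1)) f = P ((P ^ k) f) := by rw [pow_succ']; rfl
      _ ≤ P (c ^ k • h) := hP ih
      _ = c ^ k • P h := P.map_smul _ _
      _ ≤ c ^ k • c • h := smul_le_smul_of_nonneg_left hPh (pow_nonneg hc k)
      _ = c ^ (k + 1) • h := by rw [smul_smul, pow_succ]

variable [IsOrderedAddMonoid F] [CompleteSpace F] [OrderClosedTopology F]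

lemma ContinuousLinearMap.exp_smul_apply_le_of_apply_le {P : F →L[ℝ] F} (hP : Monotone P)
    {c : ℝ} (hc : 0 ≤ c) {f h : F} (hPh : P h ≤ c • h) (hfh : f ≤ h) {t : ℝ} (ht : 0 ≤ t) :
    NormedSpace.exp (t • P) f ≤ Real.exp (t * c) • h := by
  have hlhs := (NormedSpace.exp_series_hasSum_exp' (𝕂 := ℝ) (t • P)).mapL
    (ContinuousLinearMap.apply ℝ F f)
  have hrhs := (NormedSpace.exp_series_hasSum_exp' (𝕂 := ℝ) (t * c)).smul_const h
  rw [← Real.exp_eq_exp_ℝ] at hrhs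
  refine hasSum_le (fun k => ?_) hlhs hrhs
  simp only [ContinuousLinearMap.apply_apply, FunLike.coe_smul, Pi.smul_apply, smul_pow, mul_pow]
  rw [smul_eq_mul, mul_smul, mul_smul]
  gcongr
  exact P.pow_apply_le_smul_of_apply_le hP hc hPh hfh k

lemma ContinuousLinearMap.exp_smul_apply_le_of_lyapunov {A : F →L[ℝ] F} {R r : ℝ}
    (hA : Monotone (A + R • 1 : F →L[ℝ] F)) (hrR : r ≤ R) {f h : F} (hAh : A h ≤ -r • h)
    (hfh : f ≤ h) {t : ℝ} (ht : 0 ≤ t) :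
    NormedSpace.exp (t • A) f ≤ Real.exp (-r * t) • h := by
  set P := A + R • (1 : F →L[ℝ] F)
  have hPh : P h ≤ (R - r) • h := calc
    P h = A h + R • h := rfl
    _ ≤ -r • h + R • h := add_le_add_left hAh _
    _ = (R - r) • h := by rw [← add_smul, neg_add_eq_sub]
  have hsplit : t • A = (-(t * R)) • (1 : F →L[ℝ] F) + t • P := by
    simp only [P, smul_add, smul_smul]; module
  have hball (x : F →L[ℝ] F) : x ∈ Metric.eball 0 (NormedSpace.expSeries ℝ (F →L[ℝ] F)).radius := by
    simp [NormedSpace.expSeries_radius_eq_top]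
  have hexp : NormedSpace.exp (t • A) = Real.exp (-(t * R)) • NormedSpace.exp (t • P) := by
    rw [hsplit, NormedSpace.exp_add_of_commute_of_mem_ball (𝕂 := ℝ)
      ((Commute.one_left _).smul_left _) (hball _) (hball _),
      ← Algebra.algebraMap_eq_smul_one, ← NormedSpace.algebraMap_exp_comm, ← Real.exp_eq_exp_ℝ,
      Algebra.algebraMap_eq_smul_one, smul_one_mul]
  calc NormedSpace.exp (t • A) f = Real.exp (-(t * R)) • NormedSpace.exp (t • P) f := by
        rw [hexp]; rfl
    _ ≤ Real.exp (-(t * R)) • Real.exp (t * (R - r)) • h := by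
        gcongr
        exact exp_smul_apply_le_of_apply_le hA (sub_nonneg.2 hrR) hPh hfh ht
    _ = Real.exp (-r * t) • h := by rw [smul_smul, ← Real.exp_add]; ring_nf

end Semigroup

lemma exp_mul_add_exp_mul_le {θ a b L : ℝ} (hθ : 0 ≤ θ) (hab : a + b = -2) (ha : |a| ≤ L)
    (hb : |b| ≤ L) (hθL : θ * L ≤ 1) (hθL2 : 2 * θ * L ^ 2 ≤ 1) :
    Real.exp (θ * a) + Real.exp (θ * b) ≤ 2 - θ := by
  have hexp {c : ℝ} (hc : |c| ≤ L) : Real.exp (θ * c) ≤ 1 + θ * c + (θ * L) ^ 2 := by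
    have hθc : |θ * c| ≤ θ * L := by
      rw [abs_mul, abs_of_nonneg hθ]
      exact mul_le_mul_of_nonneg_left hc hθ
    have h := (abs_le.1 (Real.abs_exp_sub_one_sub_id_le (hθc.trans hθL))).2
    have := sq_le_sq' (abs_le.1 hθc).1 (abs_le.1 hθc).2
    linarith
  nlinarith [hexp ha, hexp hb, mul_le_mul_of_nonneg_left hθL2 hθ]

open Filter in
lemma eventually_rpow_add_le_self {ε : ℝ} (hε : ε < 1) (C : ℝ) :
    ∀ᶠ x : ℝ in atTop, x ^ ε + C ≤ x := by
  have hsmall : ∀ᶠ x : ℝ in atTop, x ^ (ε - 1) ≤ 1 / 2 := by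
    have := tendsto_rpow_neg_atTop (sub_pos.2 hε)
    rw [neg_sub] at this
    exact this.eventually (eventually_le_nhds (by norm_num : (0 : ℝ) < 1 / 2))
  filter_upwards [hsmall, eventually_ge_atTop (2 * C), eventually_gt_atTop 0] with x hx hCx hx0
  have : x ^ ε = x ^ (ε - 1) * x := by rw [Real.rpow_sub_one hx0.ne', div_mul_cancel₀ _ hx0.ne']
  nlinarith

lemma sum_adjacent_Icc_eq_sum_succ_add_pred {ℓ : ℕ} (hℓ : 1 ≤ ℓ) (J : ℕ → ℕ → ℝ) :
    J ℓ (ℓ + 1) + J 1 0 + ∑ y ∈ Finset.Icc 1 ℓ, ∑ z ∈ Finset.Icc 1 ℓ,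
        (if z = y + 1 ∨ y = z + 1 then J y z else 0)
      = ∑ y ∈ Finset.Icc 1 ℓ, (J y (y + 1) + J y (y - 1)) := by
  have inner : ∀ y ∈ Finset.Icc 1 ℓ,
      ∑ z ∈ Finset.Icc 1 ℓ, (if z = y + 1 ∨ y = z + 1 then J y z else 0)
        = (if y + 1 ∈ Finset.Icc 1 ℓ then J y (y + 1) else 0)
          + (if y - 1 ∈ Finset.Icc 1 ℓ then J y (y - 1) else 0) := by
    intro y hy
    rw [← Finset.sum_ite_eq' _ (y + 1), ← Finset.sum_ite_eq' _ (y - 1), ← Finset.sum_add_distrib]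
    refine Finset.sum_congr rfl fun z hz => ?_
    simp only [Finset.mem_Icc] at hy hz
    split_ifs <;> first | omega | simp
  have hℓ₁ : ℓ ∈ Finset.Icc 1 ℓ := Finset.mem_Icc.2 ⟨hℓ, le_rfl⟩
  have h₁ : 1 ∈ Finset.Icc 1 ℓ := Finset.mem_Icc.2 ⟨le_rfl, hℓ⟩
  have boundary : J ℓ (ℓ + 1) + J 1 0 = ∑ y ∈ Finset.Icc 1 ℓ,
      ((if y = ℓ then J y (y + 1) else 0) + (if y = 1 then J y (y - 1) else 0)) := by
    rw [Finset.sum_add_distrib, Finset.sum_ite_eq', Finset.sum_ite_eq', if_pos hℓ₁, if_pos h₁]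
  rw [boundary, Finset.sum_congr rfl inner, ← Finset.sum_add_distrib]
  refine Finset.sum_congr rfl fun y hy => ?_
  simp only [Finset.mem_Icc] at hy ⊢
  split_ifs <;> first | omega | ring

namespace FEP

section Move

variable {I : Type*} [DecidableEq I] {χ : I → ℕ} {x z : I}

lemma cast_move_apply (hx : 1 ≤ χ x) (hxz : x ≠ z) (u : I) :
    (move χ x z u : ℝ) = χ u + (if u = z then 1 else 0) - (if u = x then 1 else 0) := by
  unfold move
  by_cases hux : u = x
  · subst hux; simp [hxz, Nat.cast_sub hx]
  · by_cases huz : u = z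
    · subst huz; simp [hux]
    · simp [hux, huz]

variable [Fintype I]

lemma sum_mul_move (g : I → ℝ) (hx : 1 ≤ χ x) (hxz : x ≠ z) :
    ∑ u, g u * move χ x z u = ∑ u, g u * χ u + g z - g x := by
  simp only [cast_move_apply hx hxz, mul_sub, mul_add, Finset.sum_sub_distrib,
    Finset.sum_add_distrib, mul_ite, mul_one, mul_zero, Finset.sum_ite_eq', Finset.mem_univ,
    if_true]

lemma sum_move (hx : 1 ≤ χ x) (hxz : x ≠ z) : ∑ u, move χ x z u = ∑ u, χ u := by
  have h := sum_mul_move (fun _ => (1 : ℝ)) hx hxz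
  simp only [one_mul, add_sub_cancel_right] at h
  exact_mod_cast h

end Move

section Sector

variable {ℓ n : ℕ}

noncomputable def jump (χ : SZRSector ℓ n) (x z : Fin (ℓ + 2)) : SZRSector ℓ n :=
  if h : 1 ≤ χ.1 x ∧ x ≠ z then ⟨move χ.1 x z, (sum_move h.1 h.2).trans χ.2⟩ else χ

lemma jump_val {χ : SZRSector ℓ n} {x z : Fin (ℓ + 2)} (hx : 1 ≤ χ.1 x) (hxz : x ≠ z) :
    (jump χ x z).1 = move χ.1 x z := by
  simp [jump, hx, hxz]

lemma sum_jumpGenerator_mul (f : SZRSector ℓ n → ℝ) (χ : SZRSector ℓ n) {x z : Fin (ℓ + 2)}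
    (hxz : x ≠ z) :
    ∑ χ', (if 2 ≤ χ.1 x then (1 : ℝ) else 0) *
        ((if χ'.1 = move χ.1 x z then (1 : ℝ) else 0) - (if χ' = χ then 1 else 0)) * f χ'
      = (if 2 ≤ χ.1 x then (1 : ℝ) else 0) * (f (jump χ x z) - f χ) := by
  by_cases hx : 2 ≤ χ.1 x
  · have hval (χ' : SZRSector ℓ n) : χ'.1 = move χ.1 x z ↔ χ' = jump χ x z := by
      rw [← jump_val (by omega) hxz]
      exact Subtype.ext_iff.symm
    simp only [if_pos hx, one_mul, sub_mul, ite_mul, zero_mul, Finset.sum_sub_distrib, hval,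
      Finset.sum_ite_eq', Finset.mem_univ, if_true]
  · simp [hx]

lemma natCast_ne_natCast {y z : ℕ} (hy : y < ℓ + 2) (hz : z < ℓ + 2) (hyz : y ≠ z) :
    (y : Fin (ℓ + 2)) ≠ z := by
  rwa [Ne, Fin.ext_iff, Fin.val_cast_of_lt hy, Fin.val_cast_of_lt hz]

lemma genSZRE_apply (hℓ : 1 ≤ ℓ) (f : SZRSector ℓ n → ℝ) (χ : SZRSector ℓ n) :
    genSZRE ℓ n f χ = ∑ y ∈ Finset.Icc 1 ℓ, (if 2 ≤ χ.1 y then (1 : ℝ) else 0) *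
      ((f (jump χ y ((y + 1 : ℕ) : Fin (ℓ + 2))) - f χ)
        + (f (jump χ y ((y - 1 : ℕ) : Fin (ℓ + 2))) - f χ)) := by
  have hJ (y z : ℕ) (hy : y < ℓ + 2) (hz : z < ℓ + 2) (hyz : y ≠ z) :=
    sum_jumpGenerator_mul f χ (natCast_ne_natCast hy hz hyz)
  simp only [mul_add]
  rw [← sum_adjacent_Icc_eq_sum_succ_add_pred hℓ fun y z =>
    (if 2 ≤ χ.1 y then (1 : ℝ) else 0) * (f (jump χ y z) - f χ)]
  simp only [genSZRE, LinearMap.coe_toContinuousLinearMap', Matrix.toLin'_apply, Matrix.mulVec,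
    dotProduct, genSZR, add_mul, Finset.sum_add_distrib, Finset.sum_mul]
  rw [hJ ℓ (ℓ + 1) (by omega) (by omega) (by omega), hJ 1 0 (by omega) (by omega) (by omega),
    Finset.sum_comm]
  refine congrArg _ (Finset.sum_congr rfl fun y hy => ?_)
  rw [Finset.sum_comm]
  refine Finset.sum_congr rfl fun z hz => ?_
  simp only [Finset.mem_Icc] at hy hz
  by_cases hadj : z = y + 1 ∨ y = z + 1
  · simp only [hadj, if_true]
    exact hJ y z (by omega) (by omega) (by omega)
  · simp only [hadj, if_false, zero_mul, Finset.sum_const_zero]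

end Sector

section Lyapunov

variable {ℓ n : ℕ}

noncomputable def weight (ℓ u : ℕ) : ℝ := u * (ℓ + 1 - u)

lemma weight_nonneg {u : ℕ} (hu : u ≤ ℓ + 1) : 0 ≤ weight ℓ u := by
  have : (u : ℝ) ≤ ℓ + 1 := by exact_mod_cast hu
  exact mul_nonneg (Nat.cast_nonneg u) (by linarith)

lemma weight_le (u : ℕ) : weight ℓ u ≤ ((ℓ : ℝ) + 1) ^ 2 / 4 := by
  unfold weight
  nlinarith [sq_nonneg (2 * (u : ℝ) - ℓ - 1)]

noncomputable def potential (χ : SZRSector ℓ n) : ℝ := ∑ u : Fin (ℓ + 2), weight ℓ u * χ.1 u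

lemma potential_nonneg (χ : SZRSector ℓ n) : 0 ≤ potential χ :=
  Finset.sum_nonneg fun u _ => mul_nonneg (weight_nonneg (by omega)) (Nat.cast_nonneg _)

lemma potential_le (χ : SZRSector ℓ n) : potential χ ≤ ((ℓ : ℝ) + 1) ^ 2 / 4 * n := calc
  potential χ ≤ ∑ u, ((ℓ : ℝ) + 1) ^ 2 / 4 * χ.1 u :=
    Finset.sum_le_sum fun u _ => mul_le_mul_of_nonneg_right (weight_le _) (Nat.cast_nonneg _)
  _ = ((ℓ : ℝ) + 1) ^ 2 / 4 * n := by
    rw [← Finset.mul_sum, ← Nat.cast_sum, χ.2]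

lemma potential_jump {χ : SZRSector ℓ n} {x z : Fin (ℓ + 2)} (hx : 1 ≤ χ.1 x) (hxz : x ≠ z) :
    potential (jump χ x z) = potential χ + weight ℓ z - weight ℓ x := by
  rw [potential, jump_val hx hxz, sum_mul_move (fun u : Fin (ℓ + 2) => weight ℓ u) hx hxz]
  rfl

lemma potential_jump_succ {χ : SZRSector ℓ n} {y : ℕ} (hyℓ : y ≤ ℓ) (hy : 1 ≤ χ.1 y) :
    potential (jump χ y ((y + 1 : ℕ) : Fin (ℓ + 2))) = potential χ + (ℓ - 2 * y) := by
  rw [potential_jump hy (natCast_ne_natCast (by omega) (by omega) (by omega)),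
    Fin.val_cast_of_lt (by omega), Fin.val_cast_of_lt (by omega), weight, weight]
  push_cast
  ring

lemma potential_jump_pred {χ : SZRSector ℓ n} {y : ℕ} (hy1 : 1 ≤ y) (hyℓ : y ≤ ℓ)
    (hy : 1 ≤ χ.1 y) :
    potential (jump χ y ((y - 1 : ℕ) : Fin (ℓ + 2))) = potential χ + (2 * y - ℓ - 2) := by
  rw [potential_jump hy (natCast_ne_natCast (by omega) (by omega) (by omega)),
    Fin.val_cast_of_lt (by omega), Fin.val_cast_of_lt (by omega), weight, weight]
  push_cast [hy1]
  ring

def unfrozen (ℓ n : ℕ) : Set (SZRSector ℓ n) :=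
  {χ | ∃ y : ℕ, 1 ≤ y ∧ y ≤ ℓ ∧ 2 ≤ χ.1 ((y : ℕ) : Fin (ℓ + 2))}

noncomputable def lyapunov (θ : ℝ) : SZRSector ℓ n → ℝ :=
  (unfrozen ℓ n).indicator fun χ => Real.exp (θ * potential χ)

lemma lyapunov_le_exp (θ : ℝ) (χ : SZRSector ℓ n) : lyapunov θ χ ≤ Real.exp (θ * potential χ) :=
  Set.indicator_le_self' (fun _ _ => (Real.exp_pos _).le) χ

lemma lyapunov_jump_add_jump_le (hℓ : 2 ≤ ℓ) {χ : SZRSector ℓ n} {y : ℕ} (hy1 : 1 ≤ y)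
    (hyℓ : y ≤ ℓ) (hy : 2 ≤ χ.1 y) :
    lyapunov ((ℓ : ℝ) ^ 3)⁻¹ (jump χ y ((y + 1 : ℕ) : Fin (ℓ + 2)))
        + lyapunov ((ℓ : ℝ) ^ 3)⁻¹ (jump χ y ((y - 1 : ℕ) : Fin (ℓ + 2)))
      ≤ (2 - ((ℓ : ℝ) ^ 3)⁻¹) * Real.exp (((ℓ : ℝ) ^ 3)⁻¹ * potential χ) := by
  have hℓ' : (2 : ℝ) ≤ ℓ := by exact_mod_cast hℓ
  have hθL : ((ℓ : ℝ) ^ 3)⁻¹ * ℓ ≤ 1 := by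
    rw [show ((ℓ : ℝ) ^ 3)⁻¹ * ℓ = ((ℓ : ℝ) ^ 2)⁻¹ by field_simp]
    exact inv_le_one_of_one_le₀ (by nlinarith)
  have hθL2 : 2 * ((ℓ : ℝ) ^ 3)⁻¹ * ℓ ^ 2 ≤ 1 := by
    rw [show 2 * ((ℓ : ℝ) ^ 3)⁻¹ * ℓ ^ 2 = 2 / ℓ by field_simp, div_le_one (by positivity)]
    exact hℓ'
  set θ := ((ℓ : ℝ) ^ 3)⁻¹
  have hy1' : (1 : ℝ) ≤ y := by exact_mod_cast hy1
  have hyℓ' : (y : ℝ) ≤ ℓ := by exact_mod_cast hyℓ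
  have hpair : Real.exp (θ * (ℓ - 2 * y)) + Real.exp (θ * (2 * y - ℓ - 2)) ≤ 2 - θ := by
    refine exp_mul_add_exp_mul_le (by positivity) (by ring) (L := ℓ)
      (abs_le.2 ⟨by linarith, by linarith⟩) (abs_le.2 ⟨by linarith, by linarith⟩) hθL hθL2
  calc _ ≤ Real.exp (θ * potential (jump χ y ((y + 1 : ℕ) : Fin (ℓ + 2))))
        + Real.exp (θ * potential (jump χ y ((y - 1 : ℕ) : Fin (ℓ + 2)))) :=
        add_le_add (lyapunov_le_exp _ _) (lyapunov_le_exp _ _)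
    _ = Real.exp (θ * potential χ)
        * (Real.exp (θ * (ℓ - 2 * y)) + Real.exp (θ * (2 * y - ℓ - 2))) := by
        rw [potential_jump_succ hyℓ (by omega), potential_jump_pred hy1 hyℓ (by omega), mul_add,
          mul_add, Real.exp_add, Real.exp_add]
        ring
    _ ≤ (2 - θ) * Real.exp (θ * potential χ) := by
        rw [mul_comm]
        exact mul_le_mul_of_nonneg_right hpair (Real.exp_pos _).le

lemma inv_pow_three_mul_potential_le (hℓ : 1 ≤ ℓ) (hn : (n : ℝ) ≤ 2 * ℓ) (χ : SZRSector ℓ n) :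
    ((ℓ : ℝ) ^ 3)⁻¹ * potential χ ≤ 2 := by
  have hℓ' : (1 : ℝ) ≤ ℓ := by exact_mod_cast hℓ
  have hsq : ((ℓ : ℝ) + 1) ^ 2 ≤ 4 * ℓ ^ 2 := by nlinarith
  have hcube : ((ℓ : ℝ) + 1) ^ 2 / 4 * (2 * ℓ) ≤ ℓ ^ 3 * 2 := by
    nlinarith [mul_le_mul_of_nonneg_right hsq (by positivity : (0 : ℝ) ≤ ℓ)]
  rw [inv_mul_le_iff₀ (by positivity)]
  have hn' := mul_le_mul_of_nonneg_left hn (by positivity : (0 : ℝ) ≤ (ℓ + 1) ^ 2 / 4)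
  linarith [potential_le χ]

end Lyapunov

section Freezing

variable {ℓ n : ℕ}

lemma genSZRE_lyapunov_le (hℓ : 2 ≤ ℓ) :
    genSZRE ℓ n (lyapunov ((ℓ : ℝ) ^ 3)⁻¹) ≤ -((ℓ : ℝ) ^ 3)⁻¹ • lyapunov ((ℓ : ℝ) ^ 3)⁻¹ := by
  intro χ
  rw [genSZRE_apply (by omega), Pi.smul_apply, smul_eq_mul]
  by_cases hχ : χ ∈ unfrozen ℓ n
  · have hV : lyapunov ((ℓ : ℝ) ^ 3)⁻¹ χ = Real.exp (((ℓ : ℝ) ^ 3)⁻¹ * potential χ) :=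
      Set.indicator_of_mem hχ _
    obtain ⟨y₀, hy₀1, hy₀ℓ, hy₀⟩ := hχ
    have hθE : 0 ≤ ((ℓ : ℝ) ^ 3)⁻¹ * Real.exp (((ℓ : ℝ) ^ 3)⁻¹ * potential χ) := by positivity
    rw [hV]
    calc _ ≤ ∑ y ∈ Finset.Icc 1 ℓ,
          if y = y₀ then -((ℓ : ℝ) ^ 3)⁻¹ * Real.exp (((ℓ : ℝ) ^ 3)⁻¹ * potential χ) else 0 := by
          refine Finset.sum_le_sum fun y hy => ?_
          rw [Finset.mem_Icc] at hy
          by_cases hact : 2 ≤ χ.1 y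
          · have := lyapunov_jump_add_jump_le hℓ hy.1 hy.2 hact
            rw [if_pos hact, one_mul]
            split_ifs <;> linarith
          · have : y ≠ y₀ := by rintro rfl; exact hact hy₀
            rw [if_neg hact, if_neg this, zero_mul]
      _ = _ := by rw [Finset.sum_ite_eq', if_pos (Finset.mem_Icc.2 ⟨hy₀1, hy₀ℓ⟩)]
  · rw [lyapunov, Set.indicator_of_notMem hχ, mul_zero]
    refine (Finset.sum_eq_zero fun y hy => ?_).le
    rw [Finset.mem_Icc] at hy
    rw [if_neg fun hact => hχ ⟨y, hy.1, hy.2, hact⟩, zero_mul]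

lemma monotone_genSZRE_add_smul_one (hℓ : 1 ≤ ℓ) :
    Monotone (genSZRE ℓ n + (2 * ℓ : ℝ) • 1 : (SZRSector ℓ n → ℝ) →L[ℝ] _) := by
  refine (monotone_iff_map_nonneg _).2 fun f hf χ => ?_
  have hsite : ∀ y ∈ Finset.Icc 1 ℓ, -(2 * f χ) ≤ (if 2 ≤ χ.1 y then (1 : ℝ) else 0) *
      ((f (jump χ y ((y + 1 : ℕ) : Fin (ℓ + 2))) - f χ)
        + (f (jump χ y ((y - 1 : ℕ) : Fin (ℓ + 2))) - f χ)) := by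
    intro y _
    have hf₁ : 0 ≤ f (jump χ y ((y + 1 : ℕ) : Fin (ℓ + 2))) := hf _
    have hf₂ : 0 ≤ f (jump χ y ((y - 1 : ℕ) : Fin (ℓ + 2))) := hf _
    have hf₀ : 0 ≤ f χ := hf _
    split_ifs <;> linarith
  have hsum := Finset.sum_le_sum hsite
  simp only [Finset.sum_const, Nat.card_Icc, add_tsub_cancel_right, nsmul_eq_mul] at hsum
  simp only [add_apply, smul_apply, one_apply_eq_self, Pi.add_apply, Pi.smul_apply, smul_eq_mul,
    Pi.zero_apply, genSZRE_apply hℓ]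
  linarith

lemma szrProb_unfrozen_le (hℓ : 2 ≤ ℓ) (χ : SZRSector ℓ n) {t : ℝ} (ht : 0 ≤ t) :
    szrProb ℓ n χ t (unfrozen ℓ n)
      ≤ Real.exp (-((ℓ : ℝ) ^ 3)⁻¹ * t) * Real.exp (((ℓ : ℝ) ^ 3)⁻¹ * potential χ) := by
  have hℓ' : (2 : ℝ) ≤ ℓ := by exact_mod_cast hℓ
  have hθ : 0 ≤ ((ℓ : ℝ) ^ 3)⁻¹ := by positivity
  have hθR : ((ℓ : ℝ) ^ 3)⁻¹ ≤ 2 * ℓ :=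
    (inv_le_one_of_one_le₀ (one_le_pow₀ (by linarith))).trans (by linarith)
  have hind : (fun χ => if χ ∈ unfrozen ℓ n then (1 : ℝ) else 0)
      ≤ lyapunov ((ℓ : ℝ) ^ 3)⁻¹ := fun χ => by
    dsimp only
    by_cases h : χ ∈ unfrozen ℓ n
    · rw [if_pos h, lyapunov, Set.indicator_of_mem h]
      exact Real.one_le_exp (mul_nonneg hθ (potential_nonneg χ))
    · rw [if_neg h, lyapunov, Set.indicator_of_notMem h]
  have := (genSZRE ℓ n).exp_smul_apply_le_of_lyapunov (monotone_genSZRE_add_smul_one (by omega))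
    hθR (genSZRE_lyapunov_le hℓ) hind ht χ
  exact this.trans (mul_le_mul_of_nonneg_left (lyapunov_le_exp _ _) (Real.exp_pos _).le)

end Freezing

lemma sum_eq_floor_of_memA {ℓ : ℕ} {δ : ℝ} {χ₀ : Fin (ℓ + 2) → ℕ}
    (hA : memA ℓ δ (fun y => if h : y < ℓ + 2 then χ₀ ⟨y, h⟩ else 0)) :
    ∑ y, χ₀ y = ⌊(1 + δ) * ℓ⌋₊ := by
  set v : ℕ → ℕ := fun y => if h : y < ℓ + 2 then χ₀ ⟨y, h⟩ else 0
  obtain ⟨h0, hℓ1, hsum, -⟩ := hA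
  have hv : ∑ y, χ₀ y = ∑ y ∈ Finset.range (ℓ + 2), v y := by
    rw [← Fin.sum_univ_eq_sum_range]
    simp [v]
  rw [hv, Finset.sum_range_succ, Finset.sum_range_succ', hℓ1, h0, ← hsum, Finset.range_eq_Ico,
    Finset.sum_Ico_add', Finset.Ico_add_one_right_eq_Icc, add_zero, add_zero]

/-- **Freezing time of the stuck zero-range process.**  For every `δ ∈ (0,1)` and `ε < 1`
there exists `ℓ̄` such that for all `ℓ ≥ ℓ̄` and every initial configuration `χ₀ ∈ A_ℓ(δ)`,
the probability that the stuck zero-range process at time `ℓ⁴` is not yet frozen (some site of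
`Λ_ℓ` carries at least two particles) is at most `exp(−ℓ^ε)`. -/
theorem szr_freezing_time :
    ∀ δ ε : ℝ, δ ∈ Set.Ioo (0 : ℝ) 1 → ε < 1 →
    ∃ ℓbar : ℕ, ∀ ℓ : ℕ, ℓbar ≤ ℓ →
      ∀ χ₀ : Fin (ℓ + 2) → ℕ,
        memA ℓ δ (fun y => if h : y < ℓ + 2 then χ₀ ⟨y, h⟩ else 0) →
        szrProb ℓ (∑ y : Fin (ℓ + 2), χ₀ y) ⟨χ₀, rfl⟩ ((ℓ : ℝ) ^ (4 : ℕ))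
            {χ | ∃ y : ℕ, 1 ≤ y ∧ y ≤ ℓ ∧ 2 ≤ χ.1 ((y : ℕ) : Fin (ℓ + 2))}
          ≤ Real.exp (-(ℓ : ℝ) ^ ε) := by
  intro δ ε hδ hε
  obtain ⟨ℓbar, hℓbar⟩ := Filter.eventually_atTop.1 <|
    (tendsto_natCast_atTop_atTop.eventually (eventually_rpow_add_le_self hε 2)).and
      (Filter.eventually_ge_atTop 2)
  refine ⟨ℓbar, fun ℓ hℓ χ₀ hA => ?_⟩
  obtain ⟨hbig, hℓ2⟩ := hℓbar ℓ hℓ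
  have hn : ((∑ y, χ₀ y : ℕ) : ℝ) ≤ 2 * ℓ := by
    rw [sum_eq_floor_of_memA hA]
    exact (Nat.floor_le (by nlinarith [hδ.1])).trans (by nlinarith [hδ.2])
  set χ : SZRSector ℓ (∑ y, χ₀ y) := ⟨χ₀, rfl⟩
  have hpot := inv_pow_three_mul_potential_le (by omega) hn χ
  have htime : -((ℓ : ℝ) ^ 3)⁻¹ * ℓ ^ 4 = -ℓ := by field_simp
  calc _ ≤ _ := szrProb_unfrozen_le hℓ2 χ (by positivity)
    _ ≤ Real.exp (-ℓ) * Real.exp 2 := by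
      rw [htime]
      gcongr
    _ ≤ Real.exp (-(ℓ : ℝ) ^ ε) := by
      rw [← Real.exp_add]
      gcongr
      linarith

end FEP
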